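/- arXiv:2301.13456 — 5 statements merged into one kernel-verified Lean document; each statement's English description precedes it below -/
import Mathlib

section
/- If z = u_1 x w_1 = u_2 x w_2 with u_2 = u_1 v, then v·v'·w_2 = v'·w_1 where v' is any word with x = v^r v' for some r; consequently, if |v'| ≥ |v| then v is a prefix of v'. -/
lemma comm_rep {Sig : Type*} (v : List Sig) (r : ℕ) :
    v ++ (List.replicate r v).flatten = (List.replicate r v).flatten ++ v := by
  induction r with
  | zero => simp
  | succ n ih => simp only [List.replicate_succ, List.flatten_cons, List.append_assoc] at *
                 rw [ih]

theorem stmt_6 {Sig : Type*} (u1 v w1 w2 x v' : List Sig) (r : ℕ)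
    (hz : u1 ++ x ++ w1 = u1 ++ v ++ x ++ w2)
    (hx : x = (List.replicate r v).flatten ++ v') :
    v ++ v' ++ w2 = v' ++ w1 ∧ (v.length ≤ v'.length → v <+: v') := by
  subst hx
  simp only [List.append_assoc, List.append_cancel_left_eq] at hz
  rw [← List.append_assoc v, comm_rep, List.append_assoc, List.append_cancel_left_eq] at hz
  have hmain : v ++ v' ++ w2 = v' ++ w1 := by
    rw [List.append_assoc]; exact hz.symm
  refine ⟨hmain, fun hlen => ?_⟩
  have h1 : v <+: v' ++ w1 := ⟨v' ++ w2, by simpa [List.append_assoc] using hmain⟩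
  exact List.prefix_of_prefix_length_le h1 (List.prefix_append v' w1) (by simpa using hlen)
end

section
/- Let F be a field and let f : Σ* → F and g : Σ* → F be functions computed by weighted automata with state sets of sizes m and n respectively (i.e., f(w) = λ1 · A(w) · η1ᵀ and g(w) = λ2 · B(w) · η2ᵀ where A, B are monoid morphisms from Σ* to matrices). If f(w) = g(w) for all words w of length < m + n, then f = g. -/
theorem stmt_10 {Sig F : Type*} [Field F] (m n : ℕ)
    (A : List Sig → Matrix (Fin m) (Fin m) F) (B : List Sig → Matrix (Fin n) (Fin n) F)
    (hA1 : A [] = 1) (hAmul : ∀ u v : List Sig, A (u ++ v) = A u * A v)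
    (hB1 : B [] = 1) (hBmul : ∀ u v : List Sig, B (u ++ v) = B u * B v)
    (l1 e1 : Fin m → F) (l2 e2 : Fin n → F)
    (h : ∀ w : List Sig, w.length < m + n →
      dotProduct (Matrix.vecMul l1 (A w)) e1 =
        dotProduct (Matrix.vecMul l2 (B w)) e2) :
    ∀ w : List Sig,
      dotProduct (Matrix.vecMul l1 (A w)) e1 =
        dotProduct (Matrix.vecMul l2 (B w)) e2 := by
  set k := m + n with hk
  -- the reachable-vector map
  set φ : List Sig → (Fin m → F) × (Fin n → F) :=
    fun w => (Matrix.vecMul l1 (A w), Matrix.vecMul l2 (B w)) with hφ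
  -- trivial case: l1 = 0 and l2 = 0 handled inside; main argument:
  by_cases htriv : l1 = 0 ∧ l2 = 0
  · intro w
    rw [htriv.1, htriv.2, Matrix.zero_vecMul, Matrix.zero_vecMul,
      zero_dotProduct, zero_dotProduct]
  -- subspaces
  set W : ℕ → Submodule F ((Fin m → F) × (Fin n → F)) :=
    fun i => Submodule.span F {x | ∃ u : List Sig, u.length ≤ i ∧ φ u = x} with hW
  have hWmono : ∀ i, W i ≤ W (i + 1) := by
    intro i
    apply Submodule.span_mono
    rintro x ⟨u, hu, rfl⟩
    exact ⟨u, hu.trans (Nat.le_succ i), rfl⟩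
  -- right-multiplication linear maps
  have hstep : ∀ (a : Sig) (u : List Sig),
      φ (u ++ [a]) = ((A [a]).vecMulLinear.prodMap (B [a]).vecMulLinear) (φ u) := by
    intro a u
    simp only [hφ, LinearMap.prodMap_apply, Matrix.vecMulLinear_apply,
      hAmul, hBmul, Matrix.vecMul_vecMul]
  -- if W stabilizes once, it stabilizes forever
  have hstable : ∀ i, W i = W (i + 1) → ∀ w : List Sig, φ w ∈ W i := by
    intro i hi w
    induction w using List.reverseRecOn with
    | nil => exact Submodule.subset_span ⟨[], Nat.zero_le i, rfl⟩
    | append_singleton u a ih =>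
      rw [hstep a u]
      have hmap : (W i).map ((A [a]).vecMulLinear.prodMap (B [a]).vecMulLinear) ≤ W i := by
        rw [hW]
        rw [Submodule.map_span, ← hW]
        apply Submodule.span_le.mpr
        rintro x ⟨y, ⟨v, hv, rfl⟩, rfl⟩
        rw [← hstep a v]
        rw [hi]
        exact Submodule.subset_span ⟨v ++ [a], by simpa using Nat.succ_le_succ hv, rfl⟩
      exact hmap ⟨φ u, ih, rfl⟩
  -- there is a stabilization point below k
  have hrank : ∃ i < k, W i = W (i + 1) := by
    by_contra hc
    push_neg at hc
    have hlt : ∀ i < k, W i < W (i + 1) := fun i hi => lt_of_le_of_ne (hWmono i) (hc i hi)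
    have hge : ∀ i ≤ k, i + 1 ≤ Module.finrank F (W i) := by
      intro i hi
      induction i with
      | zero =>
        have hne : φ [] ∈ W 0 := Submodule.subset_span ⟨[], le_refl 0, rfl⟩
        have hne0 : φ [] ≠ 0 := by
          simp only [hφ, hA1, hB1, Matrix.vecMul_one]
          intro hcon
          exact htriv (Prod.mk_eq_zero.mp hcon)
        have hbot : W 0 ≠ ⊥ := fun hbot => hne0 (by rwa [hbot, Submodule.mem_bot] at hne)
        have := Submodule.one_le_finrank_iff.mpr hbot
        omega
      | succ j ihj =>
        have h1 : j ≤ k := Nat.le_of_succ_le hi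
        have h2 := Submodule.finrank_lt_finrank_of_lt (hlt j (Nat.lt_of_succ_le hi))
        have := ihj h1
        omega
    have h1 := hge k le_rfl
    have h2 : Module.finrank F (W k) ≤ Module.finrank F ((Fin m → F) × (Fin n → F)) :=
      Submodule.finrank_le _
    rw [Module.finrank_prod] at h2
    simp [Module.finrank_pi] at h2
    omega
  obtain ⟨i, hik, hi⟩ := hrank
  intro w
  have hmem := hstable i hi w
  -- the difference functional vanishes on W i
  have hvanish : ∀ x ∈ W i,
      dotProduct x.1 e1 = dotProduct x.2 e2 := by
    intro x hx
    induction hx using Submodule.span_induction with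
    | mem x hx =>
      obtain ⟨u, hu, rfl⟩ := hx
      exact h u (by omega)
    | zero => simp
    | add x y _ _ hx hy => simp [add_dotProduct, hx, hy]
    | smul c x _ hx => simp [smul_dotProduct, hx]
  exact hvanish (φ w) hmem
end

section
/- Let F be a field, k ∈ ℕ, and let M : Σ* → F^{k×k} be a monoid homomorphism, λ ∈ F^k, and V ⊆ F^k a subspace. If there exists a word w with λ·M(w) ∉ V, then there exists such a word of length at most k. -/
/-!
Let `U n` be the span of the vectors `λ·M(w)` with `|w| ≤ n`. These subspaces increase with `n`,
and `U (n + 1)` is obtained from `U n` by right multiplication with the letter matrices, so once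
`U n = U (n + 1)` the chain is constant from then on. A strictly increasing chain in `F^k` has at
most `k` steps, hence every reachable vector lies in `U k`; if all of `U k` lay in `V`, so would
every `λ·M(w)`.
-/

open Module

theorem Submodule.stabilises_of_monotone {K V : Type*} [DivisionRing K]
    [AddCommGroup V] [Module K V] [FiniteDimensional K V] {U : ℕ → Submodule K V}
    (hmono : Monotone U) (hstable : ∀ n, U n = U (n + 1) → U (n + 1) = U (n + 2))
    {n : ℕ} (hn : finrank K V ≤ n) : U n = U (finrank K V) := by
  have hrank : finrank K (U n) = finrank K (U (finrank K V)) :=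
    Nat.stabilises_of_monotone (f := fun n => finrank K (U n))
      (fun _ _ h => Submodule.finrank_mono (hmono h)) (fun _ => Submodule.finrank_le _)
      (fun m hm => congrArg (fun S : Submodule K V => finrank K S)
        (hstable m (Submodule.eq_of_le_of_finrank_eq (hmono m.le_succ) hm))) hn
  exact (Submodule.eq_of_le_of_finrank_eq (hmono hn) hrank.symm).symm

namespace Matrix

variable {ι Sig F : Type*} [Field F] [Fintype ι]

def reachSpan (M : List Sig → Matrix ι ι F) (l : ι → F) (n : ℕ) : Submodule F (ι → F) :=
  Submodule.span F {x | ∃ w : List Sig, w.length ≤ n ∧ l ᵥ* M w = x}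

variable (M : List Sig → Matrix ι ι F) (l : ι → F)

theorem vecMul_mem_reachSpan (w : List Sig) : l ᵥ* M w ∈ reachSpan M l w.length :=
  Submodule.subset_span ⟨w, le_rfl, rfl⟩

theorem reachSpan_mono : Monotone (reachSpan M l) := fun _ _ hmn =>
  Submodule.span_mono fun _ ⟨w, hw, hx⟩ => ⟨w, hw.trans hmn, hx⟩

variable {M}

theorem vecMul_mem_reachSpan_succ (hMmul : ∀ u v : List Sig, M (u ++ v) = M u * M v)
    (a : Sig) {n : ℕ} {x : ι → F} (hx : x ∈ reachSpan M l n) :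
    x ᵥ* M [a] ∈ reachSpan M l (n + 1) := by
  induction hx using Submodule.span_induction with
  | mem x hx =>
    obtain ⟨w, hw, rfl⟩ := hx
    refine Submodule.subset_span ⟨w ++ [a], by simpa using hw, ?_⟩
    rw [hMmul, vecMul_vecMul]
  | zero => simp
  | add x y _ _ hx hy => simpa [add_vecMul] using add_mem hx hy
  | smul c x _ hx => simpa [smul_vecMul] using Submodule.smul_mem _ c hx

theorem reachSpan_succ_eq_of_eq (hMmul : ∀ u v : List Sig, M (u ++ v) = M u * M v) {n : ℕ}
    (hn : reachSpan M l n = reachSpan M l (n + 1)) :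
    reachSpan M l (n + 1) = reachSpan M l (n + 2) := by
  refine le_antisymm (reachSpan_mono M l (by omega)) (Submodule.span_le.2 ?_)
  rintro _ ⟨w, hw, rfl⟩
  rcases w.eq_nil_or_concat with rfl | ⟨u, a, rfl⟩
  · exact Submodule.subset_span ⟨[], by simp, rfl⟩
  · have hu : l ᵥ* M u ∈ reachSpan M l n := by
      rw [hn]
      exact reachSpan_mono M l (by simp at hw; omega) (vecMul_mem_reachSpan M l u)
    simpa [hMmul, vecMul_vecMul] using vecMul_mem_reachSpan_succ l hMmul a hu

theorem vecMul_mem_reachSpan_card (hMmul : ∀ u v : List Sig, M (u ++ v) = M u * M v)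
    (w : List Sig) : l ᵥ* M w ∈ reachSpan M l (Fintype.card ι) := by
  have hstable := Submodule.stabilises_of_monotone (reachSpan_mono M l)
    (fun _ => reachSpan_succ_eq_of_eq l hMmul)
    (n := max w.length (Fintype.card ι)) (by simp)
  rw [finrank_fintype_fun_eq_card] at hstable
  exact hstable ▸ reachSpan_mono M l (le_max_left _ _) (vecMul_mem_reachSpan M l w)

end Matrix

theorem stmt_11_general {Sig F : Type*} [Field F] (k : ℕ)
    (M : List Sig → Matrix (Fin k) (Fin k) F)
    (hMmul : ∀ u v : List Sig, M (u ++ v) = M u * M v)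
    (l : Fin k → F) (V : Submodule F (Fin k → F))
    (h : ∃ w : List Sig, Matrix.vecMul l (M w) ∉ V) :
    ∃ w : List Sig, w.length ≤ k ∧ Matrix.vecMul l (M w) ∉ V := by
  by_contra! hshort
  obtain ⟨w, hw⟩ := h
  have hreach : Matrix.reachSpan M l k ≤ V :=
    Submodule.span_le.2 fun _ ⟨u, hu, hx⟩ => hx ▸ hshort u hu
  exact hw (hreach (by simpa using Matrix.vecMul_mem_reachSpan_card l hMmul w))

theorem stmt_11 {Sig F : Type*} [Field F] (k : ℕ)
    (M : List Sig → Matrix (Fin k) (Fin k) F)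
    (hM1 : M [] = 1) (hMmul : ∀ u v : List Sig, M (u ++ v) = M u * M v)
    (l : Fin k → F) (V : Submodule F (Fin k → F))
    (h : ∃ w : List Sig, Matrix.vecMul l (M w) ∉ V) :
    ∃ w : List Sig, w.length ≤ k ∧ Matrix.vecMul l (M w) ∉ V :=
  stmt_11_general k M hMmul l V h
end

section
/- Let F be a field and consider a sequence of vectors x_0, ..., x_L in F^k where each x_{i+1} = x_i · A_i for matrices A_i ∈ F^{k×k}, together with labels c_i in a finite set S of size s (labels attached to each index i). If the number of indices carrying any fixed label exceeds k, and x_L ∉ V for a subspace V, then there exist indices i < j with the same label such that x_i · (A_j A_{j+1} ⋯ A_{L-1}) ∉ V. -/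
theorem stmt_12 {F S : Type*} [Field F] [Fintype S] [DecidableEq S]
    (k L : ℕ) (V : Submodule F (Fin k → F))
    (A : ℕ → Matrix (Fin k) (Fin k) F) (x : ℕ → (Fin k → F))
    (hx : ∀ i < L, x (i + 1) = Matrix.vecMul (x i) (A i))
    (c : ℕ → S)
    (hlabel : ∃ s : S, k < ((Finset.range (L + 1)).filter (fun i => c i = s)).card)
    (hV : x L ∉ V) :
    ∃ i j : ℕ, i < j ∧ j ≤ L ∧ c i = c j ∧
      Matrix.vecMul (x i) (((List.range (L - j)).map (fun t => A (j + t))).prod) ∉ V := by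
  -- key telescoping lemma
  have key : ∀ d j : ℕ, j + d ≤ L →
      x (j + d) = Matrix.vecMul (x j) (((List.range d).map (fun t => A (j + t))).prod) := by
    intro d
    induction d with
    | zero => intro j _; simp [Matrix.vecMul_one]
    | succ d ih =>
      intro j hj
      have h1 : j + d < L := by omega
      have : x (j + d + 1) = Matrix.vecMul (x (j + d)) (A (j + d)) := hx _ h1
      rw [show j + (d + 1) = j + d + 1 from rfl, this, ih j (by omega),
        Matrix.vecMul_vecMul, List.range_succ, List.map_append, List.prod_append]
      simp
  have key' : ∀ j ≤ L,
      x L = Matrix.vecMul (x j) (((List.range (L - j)).map (fun t => A (j + t))).prod) := by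
    intro j hj
    have := key (L - j) j (by omega)
    rwa [show j + (L - j) = L by omega] at this
  classical
  by_contra hcon
  push_neg at hcon
  obtain ⟨s, hs⟩ := hlabel
  set T := (Finset.range (L + 1)).filter (fun i => c i = s) with hT
  obtain ⟨t, htT, htcard⟩ := Finset.exists_subset_card_eq (s := T) (n := k + 1) (by omega)
  set e := t.orderEmbOfFin htcard with he
  have hmemT : ∀ m : Fin (k + 1), e m ∈ T := fun m => htT (t.orderEmbOfFin_mem htcard m)
  have hmemL : ∀ m : Fin (k + 1), e m ≤ L := by
    intro m
    have := hmemT m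
    rw [hT, Finset.mem_filter, Finset.mem_range] at this
    omega
  have hlab : ∀ m : Fin (k + 1), c (e m) = s := by
    intro m
    have := hmemT m
    rw [hT, Finset.mem_filter] at this
    exact this.2
  set v : Fin (k + 1) → (Fin k → F) := fun m => x (e m) with hv
  have hnotli : ¬ LinearIndependent F v := by
    intro hli
    have := hli.fintype_card_le_finrank
    simp [Module.finrank_fin_fun] at this
  rw [Fintype.not_linearIndependent_iff] at hnotli
  obtain ⟨g, hg0, i, hgi⟩ := hnotli
  -- maximal index with nonzero coefficient
  set Z := Finset.univ.filter (fun m => g m ≠ 0) with hZ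
  have hZne : Z.Nonempty := ⟨i, by simp [hZ, hgi]⟩
  set M := Z.max' hZne with hM
  have hgM : g M ≠ 0 := (Finset.mem_filter.1 (Z.max'_mem hZne)).2
  have hle : ∀ m : Fin (k + 1), g m ≠ 0 → m ≤ M :=
    fun m hm => Z.le_max' m (by simp [hZ, hm])
  -- rewrite the dependence as: g M • v M = - sum over Iio M
  have hsum : ∑ m ∈ Finset.Iic M, g m • v m = 0 := by
    rw [← hg0]
    apply Finset.sum_subset (Finset.subset_univ _)
    intro m _ hm
    have : g m = 0 := by
      by_contra h'
      exact hm (Finset.mem_Iic.2 (hle m h'))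
    simp [this]
  rw [← Finset.Iio_insert, Finset.sum_insert (by simp)] at hsum
  -- span membership
  set SS : Set (Fin k → F) := x '' {n | n ∈ t ∧ n < e M} with hSS
  have hvM : v M ∈ Submodule.span F SS := by
    have hthis : g M • v M = - ∑ m ∈ Finset.Iio M, g m • v m := by
      rw [eq_neg_iff_add_eq_zero]; exact hsum
    have h1 : v M = (g M)⁻¹ • (-(∑ m ∈ Finset.Iio M, g m • v m)) := by
      rw [← hthis, smul_smul, inv_mul_cancel₀ hgM, one_smul]
    rw [h1]
    apply Submodule.smul_mem
    apply Submodule.neg_mem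
    apply Submodule.sum_mem
    intro m hm
    apply Submodule.smul_mem
    apply Submodule.subset_span
    refine ⟨e m, ⟨t.orderEmbOfFin_mem htcard m, ?_⟩, rfl⟩
    exact e.strictMono (Finset.mem_Iio.1 hm)
  -- push through the linear map
  set P := ((List.range (L - e M)).map (fun u => A (e M + u))).prod with hP
  have hmap := Submodule.apply_mem_span_image_of_mem_span (Matrix.vecMulLinear P) hvM
  have himg : Submodule.span F (Matrix.vecMulLinear P '' SS) ≤ V := by
    rw [Submodule.span_le]
    rintro _ ⟨_, ⟨n, ⟨hnt, hnlt⟩, rfl⟩, rfl⟩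
    have hnT := htT hnt
    rw [hT, Finset.mem_filter] at hnT
    have : c n = c (e M) := by rw [hnT.2, hlab M]
    simpa [hP] using hcon n (e M) hnlt (hmemL M) this
  have hVmem : Matrix.vecMulLinear P (v M) ∈ V := himg hmap
  rw [Matrix.vecMulLinear_apply] at hVmem
  rw [hv] at hVmem
  rw [← key' (e M) (hmemL M)] at hVmem
  exact hV hVmem
end

section
/- Let d_0, ..., d_{ℓ-1} ∈ {−1, 0, +1} with partial sums S_0 = 0, S_{i+1} = S_i + d_i, and suppose S_ℓ = R where R > C for some positive integer C, and all S_i ≥ 0. Let c : {0,...,ℓ} → Fin C be any labeling. Then there exist indices i < j with c(i) = c(j), S_i < S_j, and S_t > S_i for all i < t ≤ j — i.e., between the last visit to level S_i and the subsequent strictly higher last-visit level S_j with the same label, the path never returns to level S_i. -/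
/-! A lattice path with steps in `{-1, 0, 1}` from `0` to `R > C` visits every level `v < R`,
and the last visits to the levels `0, 1, …, C` occur at increasing times; after the last visit
to `v` the path stays strictly above `v`. By pigeonhole two of these `C + 1` last-visit times
carry the same label, and they form the required pair. -/

section LastVisit

variable {S : ℕ → ℤ} {l : ℕ}

theorem exists_eq_of_abs_step_le_one (hS : ∀ i < l, |S (i + 1) - S i| ≤ 1)
    {a b : ℕ} (hab : a ≤ b) (hbl : b ≤ l) {v : ℤ} (hav : S a ≤ v) (hvb : v ≤ S b) :
    ∃ t, a ≤ t ∧ t ≤ b ∧ S t = v := by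
  induction b, hab using Nat.le_induction with
  | base => exact ⟨a, le_rfl, le_rfl, le_antisymm hav hvb⟩
  | succ b hab ih =>
    by_cases hv : v ≤ S b
    · obtain ⟨t, hat, htb, hSt⟩ := ih (by omega) hv
      exact ⟨t, hat, by omega, hSt⟩
    · have := abs_le.mp (hS b (by omega))
      exact ⟨b + 1, by omega, le_rfl, by omega⟩

variable (S l) in
def lastVisit (v : ℤ) : ℕ := Nat.findGreatest (fun t => S t = v) l

theorem lastVisit_le (v : ℤ) : lastVisit S l v ≤ l := Nat.findGreatest_le l

variable (hS : ∀ i < l, |S (i + 1) - S i| ≤ 1) {v : ℤ}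
include hS

theorem apply_lastVisit (h0 : S 0 ≤ v) (hl : v ≤ S l) : S (lastVisit S l v) = v := by
  obtain ⟨t, -, htl, hSt⟩ := exists_eq_of_abs_step_le_one hS (Nat.zero_le l) le_rfl h0 hl
  exact Nat.findGreatest_spec (P := fun t => S t = v) htl hSt

theorem lt_apply_of_lastVisit_lt (hl : v ≤ S l) {t : ℕ} (ht : lastVisit S l v < t) (htl : t ≤ l) : v < S t := by
  by_contra! hSt
  obtain ⟨t', htt', ht'l, hSt'⟩ := exists_eq_of_abs_step_le_one hS htl le_rfl hSt hl
  exact Nat.findGreatest_is_greatest (P := fun t => S t = v) (ht.trans_le htt') ht'l hSt'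

theorem lastVisit_lt_lastVisit (h0 : S 0 ≤ v) (hl : v ≤ S l) {w : ℤ} (hvw : v < w) (hw : w ≤ S l) :
    lastVisit S l v < lastVisit S l w := by
  have hSw := apply_lastVisit hS (h0.trans hvw.le) hw
  by_contra! hle
  rcases hle.eq_or_lt with heq | hlt
  · have hSv := apply_lastVisit hS h0 hl
    rw [← heq, hSw] at hSv
    exact hvw.ne' hSv
  · have := lt_apply_of_lastVisit_lt hS hw hlt (lastVisit_le v)
    rw [apply_lastVisit hS h0 hl] at this
    exact (hvw.trans this).false

end LastVisit

theorem stmt_15_general (l R C : ℕ) (hRC : C < R)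
    (d : ℕ → ℤ) (hd : ∀ i < l, d i = -1 ∨ d i = 0 ∨ d i = 1)
    (S : ℕ → ℤ) (hS0 : S 0 = 0) (hSstep : ∀ i < l, S (i + 1) = S i + d i)
    (hSl : S l = (R : ℤ))
    (c : ℕ → Fin C) :
    ∃ i j : ℕ, i < j ∧ j ≤ l ∧ c i = c j ∧ S i < S j ∧
      ∀ t : ℕ, i < t → t ≤ j → S i < S t := by
  have hS : ∀ i < l, |S (i + 1) - S i| ≤ 1 := fun i hi => by
    rcases hd i hi with h | h | h <;> simp [hSstep i hi, h]
  have hlevel (v : Fin (C + 1)) : S 0 ≤ v ∧ (v : ℤ) ≤ S l := by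
    rw [hS0, hSl]; omega
  have pair {v w : Fin (C + 1)} (hvw : v < w)
      (hc : c (lastVisit S l v) = c (lastVisit S l w)) :
      ∃ i j : ℕ, i < j ∧ j ≤ l ∧ c i = c j ∧ S i < S j ∧
        ∀ t : ℕ, i < t → t ≤ j → S i < S t := by
    obtain ⟨hv0, hvl⟩ := hlevel v
    obtain ⟨-, hwl⟩ := hlevel w
    have hvw' : (v : ℤ) < w := by exact_mod_cast hvw
    refine ⟨_, _, lastVisit_lt_lastVisit hS hv0 hvl hvw' hwl, lastVisit_le _, hc, ?_, ?_⟩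
    · rwa [apply_lastVisit hS hv0 hvl, apply_lastVisit hS (hv0.trans hvw'.le) hwl]
    · intro t hit htj
      rw [apply_lastVisit hS hv0 hvl]
      exact lt_apply_of_lastVisit_lt hS hvl hit (htj.trans (lastVisit_le _))
  obtain ⟨v, w, hne, hc⟩ := Fintype.exists_ne_map_eq_of_card_lt
    (fun v : Fin (C + 1) => c (lastVisit S l v)) (by simp)
  rcases lt_or_gt_of_ne hne with h | h
  · exact pair h hc
  · exact pair h hc.symm

theorem stmt_15 (l R C : ℕ) (hC : 1 ≤ C) (hRC : C < R)
    (d : ℕ → ℤ) (hd : ∀ i < l, d i = -1 ∨ d i = 0 ∨ d i = 1)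
    (S : ℕ → ℤ) (hS0 : S 0 = 0) (hSstep : ∀ i < l, S (i + 1) = S i + d i)
    (hSnn : ∀ i ≤ l, 0 ≤ S i) (hSl : S l = (R : ℤ))
    (c : ℕ → Fin C) :
    ∃ i j : ℕ, i < j ∧ j ≤ l ∧ c i = c j ∧ S i < S j ∧
      ∀ t : ℕ, i < t → t ≤ j → S i < S t :=
  stmt_15_general l R C hRC d hd S hS0 hSstep hSl c
end
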